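/- Let Γ* be a symmetric d×d real matrix with zero diagonal that is strictly conditionally negative definite, and fix i < j in {1, …, d}. Suppose Q* ∈ 𝒬 satisfies Γ(Q*) = Γ*. Then the partial derivative of the function Γ ↦ (1/2) log det(CM(Γ)) on the cone 𝒞^d with respect to the coordinate Γ_{ij} (perturbing Γ*_{ij} and Γ*_{ji} simultaneously by t and differentiating at t = 0) equals Q*_{ij}/2. -/

import Mathlib

open Matrix Finset

/-- `Θ(Q)`: `Θ(Q)_{ij} = −Q_{ij}` for `i ≠ j` and `Θ(Q)_{ii} = ∑_{j≠i} Q_{ij}`. -/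
noncomputable def thetaOf {d : ℕ} (Q : Matrix (Fin d) (Fin d) ℝ) :
    Matrix (Fin d) (Fin d) ℝ :=
  Matrix.of fun i j => if i = j then ∑ l ∈ univ.filter (fun l => l ≠ i), Q i l else -Q i j

/-- Membership in `𝒬`: symmetric, zero diagonal, and `xᵀΘ(Q)x > 0` for every nonzero
`x` with `∑ᵢ xᵢ = 0`. -/
def memQ {d : ℕ} (Q : Matrix (Fin d) (Fin d) ℝ) : Prop :=
  Q.IsSymm ∧ (∀ i, Q i i = 0) ∧
    ∀ x : Fin d → ℝ, x ≠ 0 → (∑ i, x i) = 0 → 0 < x ⬝ᵥ (thetaOf Q).mulVec x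

/-- The centering matrix `P = I − (1/d)𝟙𝟙ᵀ`. -/
noncomputable def Pmat (d : ℕ) : Matrix (Fin d) (Fin d) ℝ :=
  1 - ((d : ℝ)⁻¹) • Matrix.of (fun _ _ : Fin d => (1 : ℝ))

/-- `S` is the matrix `Σ(Q)`: the unique symmetric matrix with `Σ(Q)𝟙 = 0` and
`Θ(Q)Σ(Q) = P`. -/
def isSigmaOf {d : ℕ} (Q S : Matrix (Fin d) (Fin d) ℝ) : Prop :=
  S.IsSymm ∧ S.mulVec (fun _ => 1) = 0 ∧ thetaOf Q * S = Pmat d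

/-- The variogram associated with `Σ`: `Γ_{ij} = Σ_{ii} + Σ_{jj} − 2Σ_{ij}`. -/
noncomputable def gammaOf {d : ℕ} (S : Matrix (Fin d) (Fin d) ℝ) :
    Matrix (Fin d) (Fin d) ℝ :=
  Matrix.of fun i j => S i i + S j j - 2 * S i j

/-- The inner product `⟨A, B⟩ = ∑_{i<j} A_{ij} B_{ij}` on symmetric matrices with
zero diagonal. -/
noncomputable def sinner {d : ℕ} (A B : Matrix (Fin d) (Fin d) ℝ) : ℝ :=
  ∑ p ∈ univ.filter (fun p : Fin d × Fin d => p.1 < p.2), A p.1 p.2 * B p.1 p.2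

open Classical in
/-- The spanning tree polynomial `τ(Q) = ∑_T ∏_{{i,j}∈T} Q_{ij}`, summed over all
spanning trees of the complete graph on `{1, …, d}`. -/
noncomputable def tau {d : ℕ} (Q : Matrix (Fin d) (Fin d) ℝ) : ℝ :=
  ∑ T ∈ (univ : Finset (SimpleGraph (Fin d))).filter (fun T => T.IsTree),
    ∏ p ∈ univ.filter (fun p : Fin d × Fin d => p.1 < p.2 ∧ T.Adj p.1 p.2), Q p.1 p.2

/-- The Cayley–Menger matrix of `Γ`. -/
noncomputable def CM {d : ℕ} (Γ : Matrix (Fin d) (Fin d) ℝ) :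
    Matrix (Fin (d + 1)) (Fin (d + 1)) ℝ :=
  Matrix.of fun a b =>
    if ha : (a : ℕ) < d then
      (if hb : (b : ℕ) < d then -Γ ⟨a, ha⟩ ⟨b, hb⟩ / 2 else 1)
    else (if (b : ℕ) < d then -1 else 0)

/-- Membership in the cone `𝒞^d` of symmetric matrices with zero diagonal that are
strictly conditionally negative definite. -/
def memC {d : ℕ} (Γ : Matrix (Fin d) (Fin d) ℝ) : Prop :=
  Γ.IsSymm ∧ (∀ i, Γ i i = 0) ∧
    ∀ x : Fin d → ℝ, x ≠ 0 → (∑ i, x i) = 0 → x ⬝ᵥ Γ.mulVec x < 0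

/-!
With `s = diag Σ(Q)` and `w = Θ(Q) s`, the Cayley–Menger matrix of `Γ(Q)` has the explicit
inverse `[[Θ(Q), u], [-uᵀ, c]]` with `u = -𝟙/d - w/2` and `c = -(𝟙ᵀs/d + sᵀw/4)`: this follows
from `-Γ(Q)/2 = Σ - (s𝟙ᵀ + 𝟙sᵀ)/2`, `Σ Θ(Q) = P` and `Θ(Q) 𝟙 = 0`. Perturbing `Γ_{ij} = Γ_{ji}`
by `t` perturbs `CM` by `t B` with `B = -(e_i e_jᵀ + e_j e_iᵀ)/2`, so by Jacobi's formula the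
derivative of `log det CM` is `tr (CM⁻¹ B) = -Θ(Q)_{ij} = Q_{ij}`.
-/

theorem hasDerivAt_det_one_add_smul {𝕜 n : Type*} [NontriviallyNormedField 𝕜] [Fintype n]
    [DecidableEq n] (C : Matrix n n 𝕜) :
    HasDerivAt (fun t : 𝕜 => (1 + t • C).det) C.trace 0 := by
  set p := (1 + (Polynomial.X : Polynomial 𝕜) • C.map Polynomial.C).det
  have hp : (fun t : 𝕜 => (1 + t • C).det) = fun t => p.eval t := by
    ext t
    simp [p, eval_det, ← smul_eq_mul_diagonal]
  rw [hp, ← derivative_det_one_add_X_smul C]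
  exact p.hasDerivAt 0

theorem hasDerivAt_det_add_smul {𝕜 n : Type*} [NontriviallyNormedField 𝕜] [Fintype n]
    [DecidableEq n] {M N : Matrix n n 𝕜} (hMN : M * N = 1) (B : Matrix n n 𝕜) :
    HasDerivAt (fun t : 𝕜 => (M + t • B).det) (M.det * (N * B).trace) 0 := by
  have hfac : ∀ t : 𝕜, M + t • B = M * (1 + t • (N * B)) := fun t => by
    rw [Matrix.mul_add, Matrix.mul_one, Matrix.mul_smul, ← Matrix.mul_assoc, hMN, Matrix.one_mul]
  simp_rw [hfac, det_mul]
  exact (hasDerivAt_det_one_add_smul (N * B)).const_mul M.det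

theorem hasDerivAt_log_det_add_smul {n : Type*} [Fintype n] [DecidableEq n]
    {M N : Matrix n n ℝ} (hMN : M * N = 1) (B : Matrix n n ℝ) :
    HasDerivAt (fun t : ℝ => Real.log (M + t • B).det) (N * B).trace 0 := by
  have hdet : M.det ≠ 0 := left_ne_zero_of_mul_eq_one (by rw [← det_mul, hMN, det_one])
  simpa [hdet] using (hasDerivAt_det_add_smul hMN B).log (by simpa using hdet)

section Laplacian

variable {d : ℕ} {Q : Matrix (Fin d) (Fin d) ℝ}

lemma thetaOf_apply_of_ne {a b : Fin d} (h : a ≠ b) : thetaOf Q a b = -Q a b := by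
  simp [thetaOf, h]

lemma thetaOf_apply_self (a : Fin d) : thetaOf Q a a = ∑ k ∈ univ.erase a, Q a k := by
  simp [thetaOf, Finset.filter_ne']

lemma thetaOf_isSymm (hQ : Q.IsSymm) : (thetaOf Q).IsSymm := by
  ext a b
  rcases eq_or_ne a b with rfl | h
  · rfl
  · rw [transpose_apply, thetaOf_apply_of_ne h, thetaOf_apply_of_ne h.symm, hQ.apply]

lemma sum_thetaOf_apply_right (Q : Matrix (Fin d) (Fin d) ℝ) (a : Fin d) :
    ∑ k, thetaOf Q a k = 0 := by
  rw [← add_sum_erase _ _ (mem_univ a), thetaOf_apply_self,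
    sum_congr rfl fun k hk => thetaOf_apply_of_ne (ne_of_mem_erase hk).symm, sum_neg_distrib,
    add_neg_cancel]

lemma sum_thetaOf_apply_left (hQ : Q.IsSymm) (b : Fin d) : ∑ k, thetaOf Q k b = 0 := by
  rw [sum_congr rfl fun k _ => (thetaOf_isSymm hQ).apply b k, sum_thetaOf_apply_right]

lemma sum_thetaOf_mulVec (hQ : Q.IsSymm) (x : Fin d → ℝ) : ∑ k, (thetaOf Q *ᵥ x) k = 0 := by
  simp only [mulVec, dotProduct]
  rw [sum_comm]
  simp [← sum_mul, sum_thetaOf_apply_left hQ]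

end Laplacian

section Centering

variable {d : ℕ}

lemma Pmat_apply (a b : Fin d) :
    Pmat d a b = (1 : Matrix (Fin d) (Fin d) ℝ) a b - (d : ℝ)⁻¹ := by
  simp [Pmat]

lemma Pmat_mulVec_apply (x : Fin d → ℝ) (a : Fin d) :
    (Pmat d *ᵥ x) a = x a - (d : ℝ)⁻¹ * ∑ k, x k := by
  rw [Pmat, sub_mulVec, one_mulVec, smul_mulVec]
  simp [mulVec, dotProduct, mul_sum]

lemma isSigmaOf.mul_thetaOf {Q S : Matrix (Fin d) (Fin d) ℝ} (hQ : Q.IsSymm)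
    (hS : isSigmaOf Q S) : S * thetaOf Q = Pmat d := by
  obtain ⟨hSsym, -, hΘS⟩ := hS
  rw [← hSsym.eq, ← (thetaOf_isSymm hQ).eq, ← transpose_mul, hΘS]
  ext a b
  simp [Pmat_apply, one_apply, eq_comm]

lemma sum_neg_gammaOf_div_two_mul (S : Matrix (Fin d) (Fin d) ℝ) (x : Fin d → ℝ) (a : Fin d) :
    ∑ k, -gammaOf S a k / 2 * x k = (S *ᵥ x) a - (S a a * ∑ k, x k + S.diag ⬝ᵥ x) / 2 := by
  simp only [mulVec, dotProduct, gammaOf, of_apply, diag_apply, mul_sum, ← sum_add_distrib,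
    sum_div, ← sum_sub_distrib]
  exact sum_congr rfl fun k _ => by ring

end Centering

section CayleyMenger

variable {d : ℕ} (Γ : Matrix (Fin d) (Fin d) ℝ)

@[simp] lemma CM_castSucc_castSucc (a b : Fin d) : CM Γ a.castSucc b.castSucc = -Γ a b / 2 := by
  simp [CM]

@[simp] lemma CM_castSucc_last (a : Fin d) : CM Γ a.castSucc (Fin.last d) = 1 := by
  simp [CM]

@[simp] lemma CM_last_castSucc (b : Fin d) : CM Γ (Fin.last d) b.castSucc = -1 := by
  simp [CM]

@[simp] lemma CM_last_last : CM Γ (Fin.last d) (Fin.last d) = 0 := by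
  simp [CM]

lemma CM_of_add_symm_single {i j : Fin d} (hij : i ≠ j) (t : ℝ) :
    CM (of fun a b => Γ a b + if (a = i ∧ b = j) ∨ (a = j ∧ b = i) then t else 0) =
      CM Γ + t • (-(1 / 2 : ℝ)) •
        (single i.castSucc j.castSucc 1 + single j.castSucc i.castSucc 1) := by
  ext a b
  induction a using Fin.lastCases <;> induction b using Fin.lastCases <;>
    simp [single_apply, Fin.castSucc_ne_last]
  split_ifs <;> grind

end CayleyMenger

section CayleyMengerInverse

variable {d : ℕ} {Q S : Matrix (Fin d) (Fin d) ℝ}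

variable (Q S) in
noncomputable def cmInvBorder : Fin d → ℝ :=
  -(d : ℝ)⁻¹ • 1 - (2 : ℝ)⁻¹ • (thetaOf Q *ᵥ S.diag)

variable (Q S) in
noncomputable def cmInvCorner : ℝ :=
  -((d : ℝ)⁻¹ * ∑ k, S k k + S.diag ⬝ᵥ (thetaOf Q *ᵥ S.diag) / 4)

variable (Q S) in
noncomputable def cmInv : Matrix (Fin (d + 1)) (Fin (d + 1)) ℝ :=
  of fun a b =>
    Fin.lastCases (Fin.lastCases (cmInvCorner Q S) (fun b => -cmInvBorder Q S b) b)
      (fun a => Fin.lastCases (cmInvBorder Q S a) (fun b => thetaOf Q a b) b) a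

@[simp] lemma cmInv_castSucc_castSucc (a b : Fin d) :
    cmInv Q S a.castSucc b.castSucc = thetaOf Q a b := by
  simp [cmInv]

lemma sum_cmInvBorder (hQ : Q.IsSymm) (hd : 0 < d) : ∑ k, cmInvBorder Q S k = -1 := by
  simp [cmInvBorder, sum_sub_distrib, ← mul_sum, sum_thetaOf_mulVec hQ, hd.ne']

lemma mulVec_cmInvBorder_apply (hQ : Q.IsSymm) (hS : isSigmaOf Q S) (a : Fin d) :
    (S *ᵥ cmInvBorder Q S) a = -(S a a - (d : ℝ)⁻¹ * ∑ k, S k k) / 2 := by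
  have hS1 : S *ᵥ 1 = 0 := hS.2.1
  rw [cmInvBorder, mulVec_sub, mulVec_smul, mulVec_smul, hS1, mulVec_mulVec, hS.mul_thetaOf hQ]
  simp [Pmat_mulVec_apply]
  ring

lemma sum_neg_gammaOf_div_two_mul_thetaOf (hQ : Q.IsSymm) (hS : isSigmaOf Q S) (a b : Fin d) :
    ∑ k, -gammaOf S a k / 2 * thetaOf Q k b =
      (1 : Matrix (Fin d) (Fin d) ℝ) a b + cmInvBorder Q S b := by
  have hSΘ : (S *ᵥ fun k => thetaOf Q k b) a = Pmat d a b := by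
    rw [← hS.mul_thetaOf hQ]; rfl
  have hsΘ : S.diag ⬝ᵥ (fun k => thetaOf Q k b) = (thetaOf Q *ᵥ S.diag) b := by
    rw [dotProduct_comm]
    exact sum_congr rfl fun k _ => congrArg (· * S.diag k) ((thetaOf_isSymm hQ).apply b k)
  rw [sum_neg_gammaOf_div_two_mul, hSΘ, hsΘ, sum_thetaOf_apply_left hQ, Pmat_apply]
  simp only [cmInvBorder, Pi.sub_apply, Pi.smul_apply, Pi.one_apply, smul_eq_mul]
  ring

lemma sum_neg_gammaOf_div_two_mul_cmInvBorder (hQ : Q.IsSymm) (hS : isSigmaOf Q S)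
    (hd : 0 < d) (a : Fin d) :
    ∑ k, -gammaOf S a k / 2 * cmInvBorder Q S k = -cmInvCorner Q S := by
  rw [sum_neg_gammaOf_div_two_mul, mulVec_cmInvBorder_apply hQ hS, sum_cmInvBorder hQ hd,
    cmInvCorner]
  simp only [cmInvBorder, dotProduct_sub, dotProduct_smul, smul_eq_mul, dotProduct_one,
    diag_apply]
  ring

lemma CM_gammaOf_mul_cmInv (hQ : Q.IsSymm) (hS : isSigmaOf Q S) (hd : 0 < d) :
    CM (gammaOf S) * cmInv Q S = 1 := by
  ext a b
  rw [mul_apply, Fin.sum_univ_castSucc]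
  induction a using Fin.lastCases <;> induction b using Fin.lastCases <;>
    simp [cmInv, one_apply, Fin.castSucc_ne_last, (Fin.castSucc_ne_last _).symm]
  case last.last => rw [sum_cmInvBorder hQ hd, neg_neg]
  case last.cast b => exact sum_thetaOf_apply_left hQ b
  case cast.last a => rw [sum_neg_gammaOf_div_two_mul_cmInvBorder hQ hS hd, neg_add_cancel]
  case cast.cast a b =>
    rw [sum_neg_gammaOf_div_two_mul_thetaOf hQ hS, one_apply, add_neg_cancel_right]

end CayleyMengerInverse

theorem hasDerivAt_half_log_det_CM_general {d : ℕ}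
    (Γs Qs S : Matrix (Fin d) (Fin d) ℝ)
    (i j : Fin d) (hij : i < j)
    (hQs : memQ Qs) (hS : isSigmaOf Qs S) (hΓQs : gammaOf S = Γs) :
    HasDerivAt
      (fun t : ℝ => (1 / 2) * Real.log ((CM (Matrix.of fun a b =>
        Γs a b + (if (a = i ∧ b = j) ∨ (a = j ∧ b = i) then t else 0))).det))
      (Qs i j / 2) 0 := by
  obtain ⟨hQsym, -, -⟩ := hQs
  subst hΓQs
  set B : Matrix (Fin (d + 1)) (Fin (d + 1)) ℝ := (-(1 / 2 : ℝ)) •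
    (single i.castSucc j.castSucc 1 + single j.castSucc i.castSucc 1)
  have htrace : (cmInv Qs S * B).trace = Qs i j := by
    rw [Matrix.mul_smul, trace_smul, Matrix.mul_add, trace_add, trace_mul_single,
      trace_mul_single, cmInv_castSucc_castSucc, cmInv_castSucc_castSucc,
      thetaOf_apply_of_ne hij.ne, thetaOf_apply_of_ne hij.ne', hQsym.apply i j]
    simp only [MulOpposite.op_one, one_smul, smul_eq_mul]
    ring
  simp_rw [CM_of_add_symm_single _ hij.ne]
  exact ((hasDerivAt_log_det_add_smul (CM_gammaOf_mul_cmInv hQsym hS i.pos) B).const_mul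
    (1 / 2 : ℝ)).congr_deriv (by rw [htrace]; ring)

/-- The partial derivative of `Γ ↦ (1/2) log det(CM(Γ))` with respect to the coordinate
`Γ_{ij}` at a point `Γ* = Γ(Q*)` equals `Q*_{ij}/2`. -/
theorem hasDerivAt_half_log_det_CM {d : ℕ}
    (Γs Qs S : Matrix (Fin d) (Fin d) ℝ)
    (hΓsym : Γs.IsSymm) (hΓdiag : ∀ i, Γs i i = 0)
    (hΓscnd : ∀ x : Fin d → ℝ, x ≠ 0 → (∑ i, x i) = 0 → x ⬝ᵥ Γs.mulVec x < 0)
    (i j : Fin d) (hij : i < j)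
    (hQs : memQ Qs) (hS : isSigmaOf Qs S) (hΓQs : gammaOf S = Γs) :
    HasDerivAt
      (fun t : ℝ => (1 / 2) * Real.log ((CM (Matrix.of fun a b =>
        Γs a b + (if (a = i ∧ b = j) ∨ (a = j ∧ b = i) then t else 0))).det))
      (Qs i j / 2) 0 :=
  hasDerivAt_half_log_det_CM_general Γs Qs S i j hij hQs hS hΓQs
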